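/- arXiv:1810.08633 — 2 statements merged into one kernel-verified Lean document; each statement's English description precedes it below -/
import Mathlib

section
/- For any f in the class O, the triple transform equals the single transform: B³f = Bf. -/
open Finset

noncomputable def inn {n : ℕ} (p q : Fin n → ℝ) : ℝ := ∑ i, p i * q i

noncomputable def nrm {n : ℕ} (p : Fin n → ℝ) : ℝ := Real.sqrt (∑ i, (p i)^2)

def Orth (n : ℕ) : Set (Fin n → ℝ) := {p | ∀ i, 0 ≤ p i}

noncomputable def B {n : ℕ} (f : (Fin n → ℝ) → ℝ) (p : Fin n → ℝ) : ℝ :=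
  sSup {x | ∃ q ∈ Orth n, q ≠ 0 ∧ x = inn p q / f q}

def MemO {n : ℕ} (f : (Fin n → ℝ) → ℝ) : Prop :=
  (∀ p ∈ Orth n, ∀ l : ℝ, 0 < l → f (l • p) = l * f p) ∧
  (∀ p ∈ Orth n, p ≠ 0 → 0 < f p) ∧
  (∃ c₁ c₂ : ℝ, 0 < c₁ ∧ 0 < c₂ ∧
    ∀ p ∈ Orth n, c₁ * nrm p ≤ f p ∧ f p ≤ c₂ * nrm p) ∧
  ContinuousOn f (Orth n)

def PositiveConvex {n : ℕ} (C : Set (Fin n → ℝ)) : Prop :=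
  Convex ℝ C ∧ ∀ p₀ ∈ Orth n, p₀ ∉ C → ∃ q ∈ Orth n, ∃ γ : ℝ, 0 < γ ∧
    γ ≤ inn p₀ q ∧ ∀ p ∈ C, inn p q < γ

/-! ### Auxiliary lemmas -/

lemma inn_comm {n : ℕ} (p q : Fin n → ℝ) : inn p q = inn q p := by
  unfold inn; exact Finset.sum_congr rfl fun i _ => mul_comm _ _

lemma inn_nonneg {n : ℕ} {p q : Fin n → ℝ} (hp : p ∈ Orth n) (hq : q ∈ Orth n) :
    0 ≤ inn p q :=
  Finset.sum_nonneg fun i _ => mul_nonneg (hp i) (hq i)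

lemma nrm_nonneg {n : ℕ} (p : Fin n → ℝ) : 0 ≤ nrm p := Real.sqrt_nonneg _

lemma nrm_pos {n : ℕ} {p : Fin n → ℝ} (hp0 : p ≠ 0) : 0 < nrm p := by
  unfold nrm
  apply Real.sqrt_pos.mpr
  have : ∃ i, p i ≠ 0 := by
    by_contra h
    push_neg at h
    exact hp0 (funext h)
  obtain ⟨i, hi⟩ := this
  have : 0 < (p i) ^ 2 := by positivity
  exact Finset.sum_pos' (fun j _ => sq_nonneg _) ⟨i, Finset.mem_univ i, this⟩

lemma inn_self{n : ℕ} (p : Fin n → ℝ) : inn p p = nrm p * nrm p := by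
  unfold inn nrm
  rw [Real.mul_self_sqrt (Finset.sum_nonneg fun i _ => sq_nonneg _)]
  exact Finset.sum_congr rfl fun i _ => (pow_two (p i)).symm

lemma inn_le_nrm {n : ℕ} {p q : Fin n → ℝ} (hp : p ∈ Orth n) (hq : q ∈ Orth n) :
    inn p q ≤ nrm p * nrm q := by
  unfold inn nrm
  rw [← Real.sqrt_mul (Finset.sum_nonneg fun i _ => sq_nonneg _)]
  exact (Real.le_sqrt (inn_nonneg hp hq) (by positivity)).mpr (Finset.sum_mul_sq_le_sq_mul_sq _ _ _)

/-- The key two-sided bound property, preserved by `B`. -/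
def Gd {n : ℕ} (g : (Fin n → ℝ) → ℝ) : Prop :=
  ∃ c₁ c₂ : ℝ, 0 < c₁ ∧ 0 < c₂ ∧ ∀ q ∈ Orth n, c₁ * nrm q ≤ g q ∧ g q ≤ c₂ * nrm q

lemma Gd.pos {n : ℕ} {g : (Fin n → ℝ) → ℝ} (hg : Gd g) {q : Fin n → ℝ}
    (hq : q ∈ Orth n) (hq0 : q ≠ 0) : 0 < g q := by
  obtain ⟨c₁, c₂, hc₁, hc₂, h⟩ := hg
  have h1 := (h q hq).1
  have h2 := mul_pos hc₁ (nrm_pos hq0)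
  linarith

lemma B_bddAbove {n : ℕ} {g : (Fin n → ℝ) → ℝ} (hg : Gd g) :
    ∃ c : ℝ, 0 < c ∧ ∀ p ∈ Orth n,
      ∀ x ∈ {x | ∃ q ∈ Orth n, q ≠ 0 ∧ x = inn p q / g q}, x ≤ nrm p / c := by
  obtain ⟨c₁, c₂, hc₁, hc₂, h⟩ := hg
  refine ⟨c₁, hc₁, fun p hp => ?_⟩
  rintro x ⟨q, hq, hq0, rfl⟩
  have hnq : 0 < nrm q := nrm_pos hq0
  have hgq : c₁ * nrm q ≤ g q := (h q hq).1
  have h1 : inn p q / g q ≤ (nrm p * nrm q) / (c₁ * nrm q) :=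
    div_le_div₀ (mul_nonneg (nrm_nonneg p) (nrm_nonneg q)) (inn_le_nrm hp hq)
      (mul_pos hc₁ hnq) hgq
  calc inn p q / g q ≤ (nrm p * nrm q) / (c₁ * nrm q) := h1
    _ = nrm p / c₁ := by rw [mul_div_mul_right _ _ (ne_of_gt hnq)]

lemma B_nonneg {n : ℕ} {g : (Fin n → ℝ) → ℝ} (hg : Gd g) {p : Fin n → ℝ}
    (hp : p ∈ Orth n) : 0 ≤ B g p := by
  apply Real.sSup_nonneg
  rintro x ⟨q, hq, hq0, rfl⟩
  exact div_nonneg (inn_nonneg hp hq) (le_of_lt (hg.pos hq hq0))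

/-- Antitonicity of B. -/
lemma B_anti {n : ℕ} {g₁ g₂ : (Fin n → ℝ) → ℝ} (hg₁ : Gd g₁)
    (hle : ∀ q ∈ Orth n, q ≠ 0 → g₁ q ≤ g₂ q) :
    ∀ p ∈ Orth n, B g₂ p ≤ B g₁ p := by
  intro p hp
  apply Real.sSup_le _ (B_nonneg hg₁ hp)
  rintro x ⟨q, hq, hq0, rfl⟩
  have h1 : 0 < g₁ q := hg₁.pos hq hq0
  have h2 : g₁ q ≤ g₂ q := hle q hq hq0
  have hx : inn p q / g₂ q ≤ inn p q / g₁ q :=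
    div_le_div_of_nonneg_left (inn_nonneg hp hq) h1 h2
  obtain ⟨c, hc, hbdd⟩ := B_bddAbove hg₁
  have hmem : inn p q / g₁ q ∈ {x | ∃ q' ∈ Orth n, q' ≠ 0 ∧ x = inn p q' / g₁ q'} :=
    ⟨q, hq, hq0, rfl⟩
  exact hx.trans (le_csSup ⟨nrm p / c, fun y hy => hbdd p hp y hy⟩ hmem)

/-- Taking q = p gives a lower bound on B g. -/
lemma B_lower {n : ℕ} {g : (Fin n → ℝ) → ℝ} (hg : Gd g) :
    ∃ c₂ : ℝ, 0 < c₂ ∧ ∀ p ∈ Orth n, nrm p / c₂ ≤ B g p := by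
  obtain ⟨c₁, c₂, hc₁, hc₂, h⟩ := hg
  have hg' : Gd g := ⟨c₁, c₂, hc₁, hc₂, h⟩
  refine ⟨c₂, hc₂, fun p hp => ?_⟩
  by_cases hp0 : p = 0
  · subst hp0
    have h0 : nrm (0 : Fin n → ℝ) = 0 := by unfold nrm; simp
    rw [h0]
    simpa using B_nonneg hg' hp
  · obtain ⟨c, hc, hbdd⟩ := B_bddAbove hg'
    have hle : inn p p / g p ≤ B g p :=
      le_csSup ⟨nrm p / c, fun y hy => hbdd p hp y hy⟩ ⟨p, hp, hp0, rfl⟩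
    refine le_trans ?_ hle
    have hnp : 0 < nrm p := nrm_pos hp0
    have hgp : 0 < g p := lt_of_lt_of_le (mul_pos hc₁ hnp) (h p hp).1
    rw [inn_self, div_le_div_iff₀ hc₂ hgp]
    calc nrm p * g p ≤ nrm p * (c₂ * nrm p) :=
          mul_le_mul_of_nonneg_left (h p hp).2 (nrm_nonneg p)
      _ = nrm p * nrm p * c₂ := by ring

lemma Gd_B {n : ℕ} {g : (Fin n → ℝ) → ℝ} (hg : Gd g) : Gd (B g) := by
  obtain ⟨c₂, hc₂, hlow⟩ := B_lower hg
  obtain ⟨c, hc, hbdd⟩ := B_bddAbove hg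
  refine ⟨c₂⁻¹, c⁻¹, by positivity, by positivity, fun q hq => ?_⟩
  constructor
  · rw [inv_mul_eq_div]
    exact hlow q hq
  · rw [inv_mul_eq_div]
    exact Real.sSup_le (fun x hx => hbdd q hq x hx)
      (div_nonneg (nrm_nonneg q) hc.le)

/-- B² g ≤ g on the orthant. -/
lemma BB_le {n : ℕ} {g : (Fin n → ℝ) → ℝ} (hg : Gd g) :
    ∀ p ∈ Orth n, B (B g) p ≤ g p := by
  intro p hp
  obtain ⟨c₁, c₂, hc₁, hc₂, h⟩ := hg
  have hg' : Gd g := ⟨c₁, c₂, hc₁, hc₂, h⟩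
  have hgnn : 0 ≤ g p := le_trans (mul_nonneg hc₁.le (nrm_nonneg p)) (h p hp).1
  apply Real.sSup_le _ hgnn
  rintro x ⟨q, hq, hq0, rfl⟩
  obtain ⟨cc, hcc, hlow⟩ := B_lower hg'
  have hBq : 0 < B g q :=
    lt_of_lt_of_le (div_pos (nrm_pos hq0) hcc) (hlow q hq)
  rw [div_le_iff₀ hBq]
  by_cases hp0 : p = 0
  · subst hp0
    have h0 : inn (0 : Fin n → ℝ) q = 0 := by unfold inn; simp
    rw [h0]
    exact mul_nonneg hgnn hBq.le
  · have hgp : 0 < g p := hg'.pos hp hp0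
    obtain ⟨c, hc, hbdd⟩ := B_bddAbove hg'
    have hmem : inn q p / g p ∈ {x | ∃ q' ∈ Orth n, q' ≠ 0 ∧ x = inn q q' / g q'} :=
      ⟨p, hp, hp0, rfl⟩
    have hBge : inn q p / g p ≤ B g q :=
      le_csSup ⟨nrm q / c, fun y hy => hbdd q hq y hy⟩ hmem
    calc inn p q = g p * (inn q p / g p) := by
          rw [inn_comm]; field_simp
      _ ≤ g p * B g q := mul_le_mul_of_nonneg_left hBge hgp.le

theorem B_cube_eq_B {n : ℕ} (f : (Fin n → ℝ) → ℝ) (hf : MemO f) :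
    ∀ p ∈ Orth n, B (B (B f)) p = B f p := by
  intro p hp
  obtain ⟨_, _, ⟨c₁, c₂, hc₁, hc₂, hb⟩, _⟩ := hf
  have hGf : Gd f := ⟨c₁, c₂, hc₁, hc₂, hb⟩
  have hGB : Gd (B f) := Gd_B hGf
  have hGBB : Gd (B (B f)) := Gd_B hGB
  apply le_antisymm
  · exact BB_le hGB p hp
  · exact B_anti hGBB (fun q hq hq0 => BB_le hGf q hq) p hp
end

section
/- For a finite simple graph G and nonzero weight p, the weighted independence number satisfies α_G(p) = sup_{w ≠ 0} ⟨p,w⟩ / α*_{Ḡ}(w), where the supremum is over nonzero nonnegative weight functions w on V(G). -/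
open Finset

def IndepSet {V : Type*} [Fintype V] [DecidableEq V] (G : SimpleGraph V)
    (I : Finset V) : Prop :=
  ∀ u ∈ I, ∀ v ∈ I, u ≠ v → ¬ G.Adj u v

def IsClique' {V : Type*} [Fintype V] [DecidableEq V] (G : SimpleGraph V)
    (C : Finset V) : Prop :=
  ∀ u ∈ C, ∀ v ∈ C, u ≠ v → G.Adj u v

noncomputable def alphaW {V : Type*} [Fintype V] [DecidableEq V]
    (G : SimpleGraph V) (p : V → ℝ) : ℝ :=
  sSup {x | ∃ I : Finset V, IndepSet G I ∧ x = ∑ v ∈ I, p v}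

noncomputable def alphaStarW {V : Type*} [Fintype V] [DecidableEq V]
    (G : SimpleGraph V) (p : V → ℝ) : ℝ :=
  sSup {x | ∃ q : V → ℝ, (∀ v, 0 ≤ q v ∧ q v ≤ 1) ∧
      (∀ C : Finset V, IsClique' G C → ∑ v ∈ C, q v ≤ 1) ∧ x = ∑ v, p v * q v}

/-! Let `α = α_G(p) > 0`. Cliques of `Ḡ` are exactly the independent sets of `G`, so `p / α` is a
feasible fractional point for `α*_Ḡ`; hence `⟨p, w⟩ ≤ α · α*_Ḡ(w)` for every `w ≥ 0`. Equality holds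
for the indicator of a maximum-weight independent set `I`: it is a clique of `Ḡ`, which forces
`α*_Ḡ(1_I) = 1`. -/

section

variable {V : Type*} [Fintype V] [DecidableEq V]

lemma isClique'_compl_iff (G : SimpleGraph V) (C : Finset V) : IsClique' Gᶜ C ↔ IndepSet G C :=
  forall₂_congr fun _ _ ↦ forall₂_congr fun _ _ ↦ forall_congr' fun huv ↦ by
    simp [SimpleGraph.compl_adj, huv]

lemma indepSet_singleton (G : SimpleGraph V) (v : V) : IndepSet G {v} := by
  simp [IndepSet]

lemma finite_setOf_indepSet_sum (G : SimpleGraph V) (p : V → ℝ) :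
    {x | ∃ I : Finset V, IndepSet G I ∧ x = ∑ v ∈ I, p v}.Finite := by
  refine (Set.finite_range fun J : Finset V ↦ ∑ v ∈ J, p v).subset ?_
  rintro x ⟨J, -, rfl⟩
  exact ⟨J, rfl⟩

lemma sum_le_alphaW (G : SimpleGraph V) (p : V → ℝ) {I : Finset V} (hI : IndepSet G I) :
    ∑ v ∈ I, p v ≤ alphaW G p :=
  le_csSup (finite_setOf_indepSet_sum G p).bddAbove ⟨I, hI, rfl⟩

lemma exists_indepSet_sum_eq_alphaW (G : SimpleGraph V) (p : V → ℝ) :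
    ∃ I, IndepSet G I ∧ ∑ v ∈ I, p v = alphaW G p := by
  have hne : {x | ∃ I : Finset V, IndepSet G I ∧ x = ∑ v ∈ I, p v}.Nonempty :=
    ⟨0, ∅, by simp [IndepSet], by simp⟩
  obtain ⟨I, hI, h⟩ := hne.csSup_mem (finite_setOf_indepSet_sum G p)
  exact ⟨I, hI, h.symm⟩

lemma alphaW_pos (G : SimpleGraph V) {p : V → ℝ} (hp : ∀ v, 0 ≤ p v) (hp0 : p ≠ 0) :
    0 < alphaW G p := by
  obtain ⟨v, hv⟩ : ∃ v, p v ≠ 0 := Function.ne_iff.mp hp0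
  have := sum_le_alphaW G p (indepSet_singleton G v)
  rw [sum_singleton] at this
  exact (lt_of_le_of_ne (hp v) hv.symm).trans_le this

lemma sum_mul_le_alphaStarW (H : SimpleGraph V) {w : V → ℝ} (hw : ∀ v, 0 ≤ w v) {q : V → ℝ}
    (hq : ∀ v, 0 ≤ q v ∧ q v ≤ 1) (hC : ∀ C : Finset V, IsClique' H C → ∑ v ∈ C, q v ≤ 1) :
    ∑ v, w v * q v ≤ alphaStarW H w := by
  refine le_csSup ⟨∑ v, w v, ?_⟩ ⟨q, hq, hC, rfl⟩
  rintro x ⟨q', hq', -, rfl⟩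
  exact sum_le_sum fun v _ ↦ mul_le_of_le_one_right (hw v) (hq' v).2

lemma alphaStarW_le (H : SimpleGraph V) (w : V → ℝ) {b : ℝ}
    (hb : ∀ q : V → ℝ, (∀ v, 0 ≤ q v ∧ q v ≤ 1) →
      (∀ C : Finset V, IsClique' H C → ∑ v ∈ C, q v ≤ 1) → ∑ v, w v * q v ≤ b) :
    alphaStarW H w ≤ b := by
  refine csSup_le ⟨0, 0, fun _ ↦ ⟨le_rfl, zero_le_one⟩, fun _ _ ↦ by simp, by simp⟩ ?_
  rintro x ⟨q, hq, hC, rfl⟩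
  exact hb q hq hC

lemma le_alphaStarW (H : SimpleGraph V) {w : V → ℝ} (hw : ∀ v, 0 ≤ w v) (v : V) :
    w v ≤ alphaStarW H w := by
  have hq : ∀ u, 0 ≤ (Pi.single v 1 : V → ℝ) u ∧ (Pi.single v 1 : V → ℝ) u ≤ 1 := fun u ↦ by
    rcases eq_or_ne u v with rfl | hu <;> simp [*]
  have hC : ∀ C : Finset V, IsClique' H C → ∑ u ∈ C, (Pi.single v 1 : V → ℝ) u ≤ 1 := by
    intro C _
    rw [sum_pi_single']
    split_ifs <;> norm_num
  simpa [Pi.single_apply, mul_ite] using sum_mul_le_alphaStarW H hw hq hC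

lemma alphaStarW_pos (H : SimpleGraph V) {w : V → ℝ} (hw : ∀ v, 0 ≤ w v) (hw0 : w ≠ 0) :
    0 < alphaStarW H w := by
  obtain ⟨v, hv⟩ : ∃ v, w v ≠ 0 := Function.ne_iff.mp hw0
  exact (lt_of_le_of_ne (hw v) hv.symm).trans_le (le_alphaStarW H hw v)

lemma alphaStarW_indicator_of_isClique' (H : SimpleGraph V) {C : Finset V} (hC : IsClique' H C)
    (hne : C.Nonempty) : alphaStarW H (fun v ↦ if v ∈ C then 1 else 0) = 1 := by
  have hw : ∀ v, (0 : ℝ) ≤ if v ∈ C then 1 else 0 := fun _ ↦ ite_nonneg zero_le_one le_rfl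
  refine le_antisymm (alphaStarW_le H _ fun q _ hq ↦ ?_) ?_
  · simpa [ite_mul, sum_ite_mem] using hq C hC
  · obtain ⟨v, hv⟩ := hne
    simpa [hv] using le_alphaStarW H hw v

lemma sum_mul_le_alphaW_mul_alphaStarW_compl (G : SimpleGraph V) {p : V → ℝ}
    (hp : ∀ v, 0 ≤ p v) (hp0 : p ≠ 0) {w : V → ℝ} (hw : ∀ v, 0 ≤ w v) :
    ∑ v, p v * w v ≤ alphaW G p * alphaStarW Gᶜ w := by
  have hα := alphaW_pos G hp hp0
  have hq : ∀ v, 0 ≤ p v / alphaW G p ∧ p v / alphaW G p ≤ 1 := fun v ↦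
    ⟨div_nonneg (hp v) hα.le, (div_le_one hα).2 <| by
      simpa using sum_le_alphaW G p (indepSet_singleton G v)⟩
  have hC : ∀ C : Finset V, IsClique' Gᶜ C → ∑ v ∈ C, p v / alphaW G p ≤ 1 := fun C hC ↦ by
    rw [← sum_div, div_le_one hα]
    exact sum_le_alphaW G p ((isClique'_compl_iff G C).1 hC)
  have h := sum_mul_le_alphaStarW Gᶜ hw hq hC
  simp_rw [mul_div, ← sum_div, div_le_iff₀ hα, mul_comm (w _)] at h
  linarith

end

theorem alpha_dual {V : Type*} [Fintype V] [DecidableEq V]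
    (G : SimpleGraph V) (p : V → ℝ) (hp : ∀ v, 0 ≤ p v) (hp0 : p ≠ 0) :
    alphaW G p = sSup {x | ∃ w : V → ℝ, (∀ v, 0 ≤ w v) ∧ w ≠ 0 ∧
      x = (∑ v, p v * w v) / alphaStarW Gᶜ w} := by
  refine (IsGreatest.csSup_eq ⟨?_, ?_⟩).symm
  · obtain ⟨I, hI, hsum⟩ := exists_indepSet_sum_eq_alphaW G p
    obtain ⟨v, hv⟩ : I.Nonempty := by
      rw [nonempty_iff_ne_empty]
      rintro rfl
      exact (alphaW_pos G hp hp0).ne (by simpa using hsum)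
    refine ⟨fun v ↦ if v ∈ I then 1 else 0, fun _ ↦ ite_nonneg zero_le_one le_rfl,
      Function.ne_iff.mpr ⟨v, by simp [hv]⟩, ?_⟩
    rw [alphaStarW_indicator_of_isClique' Gᶜ ((isClique'_compl_iff G I).2 hI) ⟨v, hv⟩, div_one,
      ← hsum]
    simp [mul_ite, sum_ite_mem]
  · rintro x ⟨w, hw, hw0, rfl⟩
    rw [div_le_iff₀ (alphaStarW_pos Gᶜ hw hw0)]
    exact sum_mul_le_alphaW_mul_alphaStarW_compl G hp hp0 hw
end
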